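/- arXiv:0712.0001 — 2 statements merged into one kernel-verified Lean document; each statement's English description precedes it below -/
import Mathlib

section
/- Let f ∈ ℂ[x,y] be a nonzero polynomial and write f_x = ∂f/∂x, f_y = ∂f/∂y. Assume that the Krull dimension of ℂ[x,y]/(f, f_x, f_y) is at most 0, the Krull dimension of ℂ[x,y]/(f, f_x) is at most 1, and the Krull dimension of ℂ[x,y]/(f, f_y) is at most 1. Then the Krull dimension of the quotient ring ℂ[x,y,ξ,η]/(f·ξ, f·η, f_y·ξ − f_x·η) is at most 2. -/
/-!
Krull dimension is bounded by transcendence degree: along a strict chain of primes `p < q`,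
a nonzero element of `q / p` stays transcendental over any lift to `R / p` of an algebraically
independent family of `R / q`, so `trdeg (R / q) + 1 ≤ trdeg (R / p)`. It therefore suffices to
show that every domain `S` generated by a point `(x, y, ξ, η)` of `V(fξ, fη, f_y ξ - f_x η)`
has transcendence degree at most `2`. If `f(x, y) ≠ 0`, then `ξ = η = 0`. If `f(x, y) = 0` but,
say, `f_y(x, y) ≠ 0`, then `x, y` are algebraic over a single element `u` and `ξ = f_x η / f_y`,
so `S` is algebraic over `K[u, η]`. If `f`, `f_x`, `f_y` all vanish at `(x, y)`, then
`dim K[x, y]/(f, f_x, f_y) ≤ 0` makes `x, y` algebraic over `K`, and `S` is algebraic over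
`K[ξ, η]`.
-/

open MvPolynomial Algebra Cardinal

section TranscendenceDegree

variable {K : Type*} [Field K]

theorem transcendental_adjoin_of_map_eq_zero {D E ι : Type*} [CommRing D] [IsDomain D]
    [CommRing E] [Algebra K D] [Algebra K E] (φ : D →ₐ[K] E) {x : ι → D}
    (hx : AlgebraicIndependent K (φ ∘ x)) {a : D} (ha : a ≠ 0) (hφa : φ a = 0) :
    Transcendental (adjoin K (Set.range x)) a := by
  intro halg
  -- `a * t = r` with `0 ≠ r ∈ K[x]`, but `φ` kills `r` and is injective on `K[x]`.
  obtain ⟨t, -, r, hr, hat⟩ :=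
    halg.exists_nonzero_eq_adjoin_mul (mem_nonZeroDivisors_of_ne_zero ha)
  obtain ⟨P, hP⟩ : ∃ P, aeval x P = (r : D) := by
    simpa [adjoin_range_eq_range_aeval] using r.2
  have hφr : aeval (φ ∘ x) P = 0 := by
    rw [Function.comp_def, ← comp_aeval_apply, hP, show (r : D) = a * t from hat.symm,
      map_mul, hφa, zero_mul]
  refine hr (Subtype.ext ?_)
  rw [← hP, hx.eq_zero_of_aeval_eq_zero P hφr, map_zero, Subalgebra.coe_zero]

theorem trdeg_quotient_add_one_le {R : Type*} [CommRing R] [Algebra K R] {p q : Ideal R}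
    [p.IsPrime] [q.IsPrime] (hpq : p < q) : trdeg K (R ⧸ q) + 1 ≤ trdeg K (R ⧸ p) := by
  obtain ⟨s, hs⟩ := exists_isTranscendenceBasis K (R ⧸ q)
  let π : R ⧸ p →ₐ[K] R ⧸ q := Ideal.Quotient.factorₐ K hpq.le
  choose x hx using fun i : s => Ideal.Quotient.factor_surjective hpq.le (i : R ⧸ q)
  have hπx : AlgebraicIndependent K (π ∘ x) := by
    rw [show π ∘ x = (↑) from funext hx]
    exact hs.1
  obtain ⟨a, haq, hap⟩ := SetLike.exists_of_lt hpq
  have hind : AlgebraicIndependent K (fun o : Option s => o.elim (Ideal.Quotient.mk p a) x) :=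
    AlgebraicIndependent.option_iff.mpr ⟨hπx.of_comp π,
      transcendental_adjoin_of_map_eq_zero π hπx
        (by rwa [Ne, Ideal.Quotient.eq_zero_iff_mem])
        (Ideal.Quotient.eq_zero_iff_mem.mpr haq)⟩
  simpa [← hs.cardinalMk_eq_trdeg] using hind.cardinalMk_le_trdeg

theorem LTSeries.length_add_trdeg_quotient_last_le {R : Type*} [CommRing R] [Algebra K R]
    (l : LTSeries (PrimeSpectrum R)) :
    l.length + trdeg K (R ⧸ l.last.asIdeal) ≤ trdeg K (R ⧸ l.head.asIdeal) := by
  induction l using RelSeries.inductionOn with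
  | singleton P => simp only [RelSeries.singleton_length, Nat.cast_zero, zero_add]; exact le_rfl
  | cons l P hP ih =>
    rw [RelSeries.cons_length, RelSeries.last_cons, RelSeries.head_cons]
    calc ((l.length + 1 : ℕ) : Cardinal) + trdeg K (R ⧸ l.last.asIdeal)
        = (l.length + trdeg K (R ⧸ l.last.asIdeal)) + 1 := by push_cast; ring
      _ ≤ trdeg K (R ⧸ l.head.asIdeal) + 1 := by gcongr
      _ ≤ trdeg K (R ⧸ P.asIdeal) := trdeg_quotient_add_one_le hP

theorem ringKrullDim_le_of_trdeg_quotient_le {R : Type*} [CommRing R] [Algebra K R] (n : ℕ)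
    (h : ∀ P : PrimeSpectrum R, trdeg K (R ⧸ P.asIdeal) ≤ n) : ringKrullDim R ≤ n := by
  refine iSup_le fun l => ?_
  have hl : (l.length : Cardinal) ≤ n :=
    le_self_add.trans ((l.length_add_trdeg_quotient_last_le (K := K)).trans (h l.head))
  exact_mod_cast hl

theorem isIntegral_of_ringKrullDim_quotient_nonpos {σ R : Type*} [Finite σ] [CommRing R]
    [Algebra K R] {J : Ideal (MvPolynomial σ K)}
    (hJ : ringKrullDim (MvPolynomial σ K ⧸ J) ≤ 0) {v : σ → R} (hJv : J ≤ RingHom.ker (aeval v))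
    (i : σ) : IsIntegral K (v i) := by
  have : Ring.KrullDimLE 0 (MvPolynomial σ K ⧸ J) := Ring.krullDimLE_iff.mpr (mod_cast hJ)
  have : Module.Finite K (MvPolynomial σ K ⧸ J) :=
    (Module.finite_iff_krullDimLE_zero K _).mpr this
  have := (Algebra.IsIntegral.isIntegral (R := K) (Ideal.Quotient.mk J (X i))).map
    (Ideal.Quotient.liftₐ J (aeval v) hJv)
  exact aeval_X (R := K) v i ▸ this

variable {S : Type*} [CommRing S] [IsDomain S] [Algebra K S]

theorem isAlgebraic_of_mem_adjoin {t : Set S} {a : S} (ha : a ∈ adjoin K t) :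
    IsAlgebraic (adjoin K t) a :=
  isAlgebraic_algebraMap (⟨a, ha⟩ : adjoin K t)

theorem trdeg_le_of_isAlgebraic_adjoin {s : Set S} (hs : adjoin K s = ⊤) (t : Set S)
    (hst : ∀ a ∈ s, IsAlgebraic (adjoin K t) a) : trdeg K S ≤ #t := by
  have hle : adjoin K s ≤ (Subalgebra.algebraicClosure (adjoin K t) S).restrictScalars K :=
    adjoin_le hst
  have : Algebra.IsAlgebraic (adjoin K t) S := ⟨fun a => hle (hs ▸ Algebra.mem_top)⟩
  exact Algebra.IsAlgebraic.trdeg_le_cardinalMk K t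

theorem exists_isAlgebraic_adjoin_singleton_of_aeval_eq_zero {f : MvPolynomial (Fin 2) K}
    (hf : f ≠ 0) {pt : Fin 2 → S} (hpt : aeval pt f = 0) :
    ∃ u : S, IsAlgebraic (adjoin K {u}) (pt 0) ∧ IsAlgebraic (adjoin K {u}) (pt 1) := by
  by_cases h1 : IsAlgebraic K (pt 1)
  · exact ⟨pt 0, isAlgebraic_of_mem_adjoin (subset_adjoin rfl),
      h1.extendScalars (algebraMap K (adjoin K {pt 0})).injective⟩
  by_cases h0 : IsAlgebraic (adjoin K {pt 1}) (pt 0)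
  · exact ⟨pt 1, h0, isAlgebraic_of_mem_adjoin (subset_adjoin rfl)⟩
  have hind : AlgebraicIndependent K (fun o : Option (Fin 1) => o.elim (pt 0) fun _ => pt 1) :=
    AlgebraicIndependent.option_iff.mpr
      ⟨algebraicIndependent_unique_type_iff.mpr h1, by rwa [Set.range_const]⟩
  have hpt_ind : AlgebraicIndependent K pt :=
    (algebraicIndependent_equiv' (_root_.finSuccEquiv 1)
      (by ext i; fin_cases i <;> rfl)).mpr hind
  exact absurd (hpt_ind.eq_zero_of_aeval_eq_zero f hpt) hf

theorem trdeg_le_two_of_isAlgebraic_adjoin_pair {pt : Fin 2 → S} {a b u : S}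
    (hgen : adjoin K (Set.range pt ∪ {a, b}) = ⊤)
    (hpt : ∀ i, IsAlgebraic (adjoin K {u, b}) (pt i)) (ha : IsAlgebraic (adjoin K {u, b}) a) :
    trdeg K S ≤ 2 := by
  refine (trdeg_le_of_isAlgebraic_adjoin hgen {u, b} ?_).trans ?_
  · rintro z (⟨i, rfl⟩ | rfl | rfl)
    · exact hpt i
    · exact ha
    · exact isAlgebraic_of_mem_adjoin (subset_adjoin (Set.mem_insert_of_mem u rfl))
  · calc #({u, b} : Set S) ≤ #({b} : Set S) + 1 := mk_insert_le
      _ = 2 := by rw [mk_singleton, one_add_one_eq_two]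

theorem trdeg_le_two_of_aeval_mul_eq_aeval_mul {f g h : MvPolynomial (Fin 2) K} (hf : f ≠ 0)
    {pt : Fin 2 → S} {a b : S} (hgen : adjoin K (Set.range pt ∪ {a, b}) = ⊤)
    (hfpt : aeval pt f = 0) (hgpt : aeval pt g ≠ 0) (hrel : aeval pt g * a = aeval pt h * b) :
    trdeg K S ≤ 2 := by
  obtain ⟨u, hu₀, hu₁⟩ := exists_isAlgebraic_adjoin_singleton_of_aeval_eq_zero hf hfpt
  have hsub : adjoin K {u} ≤ adjoin K {u, b} :=
    adjoin_mono (Set.singleton_subset_iff.mpr (Set.mem_insert u {b}))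
  have hpt : ∀ i, IsAlgebraic (adjoin K {u, b}) (pt i) := Fin.forall_fin_two.mpr
    ⟨hu₀.tower_top_of_subalgebra_le hsub, hu₁.tower_top_of_subalgebra_le hsub⟩
  set T := insert b (Set.range pt)
  have hmem : ∀ p, aeval pt p ∈ adjoin K T := fun p =>
    adjoin_mono (Set.subset_insert b _) ((adjoin_range_eq_range_aeval K pt).ge ⟨p, rfl⟩)
  have ha : IsAlgebraic (adjoin K T) a := by
    refine .of_mul (mem_nonZeroDivisors_of_ne_zero hgpt) (isAlgebraic_of_mem_adjoin (hmem g)) ?_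
    rw [hrel]
    exact isAlgebraic_of_mem_adjoin (mul_mem (hmem h) (subset_adjoin (Set.mem_insert b _)))
  refine trdeg_le_two_of_isAlgebraic_adjoin_pair hgen hpt (ha.adjoin_of_forall_isAlgebraic ?_)
  rintro z ⟨rfl | ⟨i, rfl⟩, -⟩
  · exact isAlgebraic_of_mem_adjoin (subset_adjoin (Set.mem_insert_of_mem u rfl))
  · exact hpt i

theorem trdeg_le_two_of_aeval_eq_zero {f : MvPolynomial (Fin 2) K} (hf : f ≠ 0)
    (h0 : ringKrullDim (MvPolynomial (Fin 2) K ⧸ Ideal.span {f, pderiv 0 f, pderiv 1 f}) ≤ 0)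
    {v : Fin 4 → S} (hv : adjoin K (Set.range v) = ⊤)
    (hfξ : aeval v (rename (Fin.castAdd 2) f * X 2) = 0)
    (hfη : aeval v (rename (Fin.castAdd 2) f * X 3) = 0)
    (hrel : aeval v (rename (Fin.castAdd 2) (pderiv 1 f) * X 2
      - rename (Fin.castAdd 2) (pderiv 0 f) * X 3) = 0) :
    trdeg K S ≤ 2 := by
  set pt := v ∘ Fin.castAdd 2
  simp only [map_mul, map_sub, aeval_rename, aeval_X] at hfξ hfη hrel
  rw [sub_eq_zero] at hrel
  have hgen : adjoin K (Set.range pt ∪ {v 2, v 3}) = ⊤ :=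
    top_unique (hv ▸ adjoin_mono (Set.range_subset_iff.mpr fun i => by fin_cases i <;> simp [pt]))
  by_cases hf0 : aeval pt f = 0
  · by_cases hfy : aeval pt (pderiv 1 f) = 0
    · by_cases hfx : aeval pt (pderiv 0 f) = 0
      · have hint := isIntegral_of_ringKrullDim_quotient_nonpos h0 (v := pt)
          (Ideal.span_le.mpr (by rintro p (rfl | rfl | rfl) <;> assumption))
        exact trdeg_le_two_of_isAlgebraic_adjoin_pair (u := v 2) hgen
          (fun i => (hint i).tower_top.isAlgebraic)
          (isAlgebraic_of_mem_adjoin (subset_adjoin (Set.mem_insert _ _)))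
      · exact trdeg_le_two_of_aeval_mul_eq_aeval_mul hf (Set.pair_comm (v 2) (v 3) ▸ hgen) hf0
          hfx hrel.symm
    · exact trdeg_le_two_of_aeval_mul_eq_aeval_mul hf hgen hf0 hfy hrel
  · have h2 : v 2 = 0 := (mul_eq_zero.mp hfξ).resolve_left hf0
    have h3 : v 3 = 0 := (mul_eq_zero.mp hfη).resolve_left hf0
    refine (trdeg_le_of_isAlgebraic_adjoin hgen (Set.range pt) ?_).trans ?_
    · rintro z (⟨i, rfl⟩ | rfl | rfl)
      · exact isAlgebraic_of_mem_adjoin (subset_adjoin ⟨i, rfl⟩)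
      · rw [h2]; exact isAlgebraic_zero
      · rw [h3]; exact isAlgebraic_zero
    · simpa using mk_range_le_lift (f := pt)

end TranscendenceDegree

theorem stmt1_general (f : MvPolynomial (Fin 2) ℂ) (hf : f ≠ 0)
    (h0 : ringKrullDim (MvPolynomial (Fin 2) ℂ ⧸
      Ideal.span {f, pderiv 0 f, pderiv 1 f}) ≤ 0) :
    ringKrullDim (MvPolynomial (Fin 4) ℂ ⧸
      Ideal.span
        { (rename (Fin.castAdd 2) f) * X 2,
          (rename (Fin.castAdd 2) f) * X 3,
          (rename (Fin.castAdd 2) (pderiv 1 f)) * X 2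
            - (rename (Fin.castAdd 2) (pderiv 0 f)) * X 3 }) ≤ 2 := by
  refine ringKrullDim_le_of_trdeg_quotient_le (K := ℂ) 2 fun P => ?_
  let φ := (Ideal.Quotient.mkₐ ℂ P.asIdeal).comp (Ideal.Quotient.mkₐ ℂ _)
  have hφ : aeval (φ ∘ X) = φ := (aeval_unique φ).symm
  refine trdeg_le_two_of_aeval_eq_zero hf h0 (v := φ ∘ X) ?_ ?_ ?_ ?_
  · rw [adjoin_range_eq_range_aeval, hφ, AlgHom.range_eq_top]
    exact (Ideal.Quotient.mkₐ_surjective ℂ _).comp (Ideal.Quotient.mkₐ_surjective ℂ _)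
  all_goals
    rw [hφ, AlgHom.comp_apply, Ideal.Quotient.mkₐ_eq_mk, Ideal.Quotient.mkₐ_eq_mk,
      Ideal.Quotient.eq_zero_iff_mem.mpr (Ideal.subset_span (by simp)), map_zero]

/-- If `f ∈ ℂ[x,y]` is nonzero with `dim ℂ[x,y]/(f,fₓ,f_y) ≤ 0`,
`dim ℂ[x,y]/(f,fₓ) ≤ 1` and `dim ℂ[x,y]/(f,f_y) ≤ 1`, then
`dim ℂ[x,y,ξ,η]/(fξ, fη, f_y ξ − fₓ η) ≤ 2`. -/
theorem stmt1 (f : MvPolynomial (Fin 2) ℂ) (hf : f ≠ 0)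
    (h0 : ringKrullDim (MvPolynomial (Fin 2) ℂ ⧸
      Ideal.span {f, pderiv 0 f, pderiv 1 f}) ≤ 0)
    (h1 : ringKrullDim (MvPolynomial (Fin 2) ℂ ⧸
      Ideal.span {f, pderiv 0 f}) ≤ 1)
    (h2 : ringKrullDim (MvPolynomial (Fin 2) ℂ ⧸
      Ideal.span {f, pderiv 1 f}) ≤ 1) :
    ringKrullDim (MvPolynomial (Fin 4) ℂ ⧸
      Ideal.span
        { (rename (Fin.castAdd 2) f) * X 2,
          (rename (Fin.castAdd 2) f) * X 3,
          (rename (Fin.castAdd 2) (pderiv 1 f)) * X 2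
            - (rename (Fin.castAdd 2) (pderiv 0 f)) * X 3 }) ≤ 2 :=
  stmt1_general f hf h0
end

section
/- Let f = (x³ + y⁴ + xy³)(x² − y²) ∈ ℂ[x,y]. Then the two derivations δ₁ = (x³ + (1/3)x²y − (4/3)xy²)∂x + ((2/3)x²y + (1/3)xy² − y³)∂y and δ₂ = (−x² + 4xy + 3x²y + 4xy² − y³)∂x + (x² − xy + 3y² + 2xy² + 4y³)∂y belong to Der(−log f) and form a ℂ[x,y]-basis of the ℂ[x,y]-module Der(−log f). -/
/-!
Saito's criterion in the plane. The coefficient determinant of `δ₁, δ₂` with respect to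
`∂x, ∂y` is exactly `f`, so by Cramer's rule `f • δ = det(δ, δ₂) • δ₁ + det(δ₁, δ) • δ₂` for
every derivation `δ`. If `δ` is logarithmic, each of these minors times `∂f/∂x` is a combination
of `δ f` and `δᵢ f`, hence divisible by `f`. Finally `∂f/∂x` is a non-zero-divisor modulo `f`:
`f` is monic in `x`, and the ideal `(f, ∂f/∂x)` contains a nonzero polynomial in `y` alone.
-/

open MvPolynomial

/-- The `R`-module of logarithmic derivations `Der(−log f) = {δ : f ∣ δ f}`. -/
noncomputable def logDer (f : MvPolynomial (Fin 2) ℂ) :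
    Submodule (MvPolynomial (Fin 2) ℂ)
      (Derivation ℂ (MvPolynomial (Fin 2) ℂ) (MvPolynomial (Fin 2) ℂ)) where
  carrier := {δ | f ∣ δ f}
  add_mem' := fun h1 h2 => by simpa using dvd_add h1 h2
  zero_mem' := by simp
  smul_mem' := fun c δ h => by simpa using h.mul_left c

noncomputable def xx : MvPolynomial (Fin 2) ℂ := X 0
noncomputable def yy : MvPolynomial (Fin 2) ℂ := X 1

/-- `f = (x³ + y⁴ + xy³)(x² − y²)`. -/
noncomputable def f10 : MvPolynomial (Fin 2) ℂ :=
  (xx ^ 3 + yy ^ 4 + xx * yy ^ 3) * (xx ^ 2 - yy ^ 2)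

/-- `δ₁ = (x³ + (1/3)x²y − (4/3)xy²)∂x + ((2/3)x²y + (1/3)xy² − y³)∂y`. -/
noncomputable def δ₁ : Derivation ℂ (MvPolynomial (Fin 2) ℂ) (MvPolynomial (Fin 2) ℂ) :=
  (xx ^ 3 + C (1/3 : ℂ) * xx ^ 2 * yy - C (4/3 : ℂ) * xx * yy ^ 2) • pderiv 0 +
    (C (2/3 : ℂ) * xx ^ 2 * yy + C (1/3 : ℂ) * xx * yy ^ 2 - yy ^ 3) • pderiv 1

/-- `δ₂ = (−x² + 4xy + 3x²y + 4xy² − y³)∂x + (x² − xy + 3y² + 2xy² + 4y³)∂y`. -/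
noncomputable def δ₂ : Derivation ℂ (MvPolynomial (Fin 2) ℂ) (MvPolynomial (Fin 2) ℂ) :=
  (-xx ^ 2 + 4 * xx * yy + 3 * xx ^ 2 * yy + 4 * xx * yy ^ 2 - yy ^ 3) • pderiv 0 +
    (xx ^ 2 - xx * yy + 3 * yy ^ 2 + 2 * xx * yy ^ 2 + 4 * yy ^ 3) • pderiv 1

theorem Polynomial.Monic.dvd_of_dvd_mul_C {A : Type*} [CommRing A] [IsDomain A]
    {P v : Polynomial A} {c : A} (hP : P.Monic) (hc : c ≠ 0) (h : P ∣ v * C c) : P ∣ v := by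
  rw [← modByMonic_eq_zero_iff_dvd hP]
  have hdiv : P ∣ v %ₘ P * C c := by
    have hv := modByMonic_add_div v P
    rw [show v %ₘ P * C c = v * C c - P * (v /ₘ P * C c) by linear_combination C c * hv]
    exact dvd_sub h (dvd_mul_right _ _)
  have hdeg : (v %ₘ P * C c).degree < P.degree := by
    rw [degree_mul_C hc]
    exact degree_modByMonic_lt v hP
  simpa [hc] using eq_zero_of_dvd_of_degree_lt hdiv hdeg

namespace MvPolynomial

theorem derivation_apply_eq_sum_pderiv {R σ : Type*} [CommSemiring R] [Fintype σ]
    (D : Derivation R (MvPolynomial σ R) (MvPolynomial σ R)) (p : MvPolynomial σ R) :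
    D p = ∑ i, D (X i) * pderiv i p := by
  classical
  have hD : D = ∑ i, D (X i) • pderiv i := derivation_ext fun j => by
    simp only [← Derivation.coeFnAddMonoidHom_apply, map_sum, Finset.sum_apply]
    simp [pderiv_X, Pi.single_apply]
  conv_lhs => rw [hD]
  simp only [← Derivation.coeFnAddMonoidHom_apply, map_sum, Finset.sum_apply]
  simp

theorem derivation_eq_of_smul_eq_smul {R σ : Type*} [CommRing R] [IsDomain R]
    {f : MvPolynomial σ R} (hf : f ≠ 0)
    {D₁ D₂ : Derivation R (MvPolynomial σ R) (MvPolynomial σ R)} (h : f • D₁ = f • D₂) :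
    D₁ = D₂ :=
  derivation_ext fun i => mul_left_cancel₀ hf (by simpa using congrArg (· (X i)) h)

theorem finSuccEquiv_rename_succ {R : Type*} [CommSemiring R] {n : ℕ}
    (s : MvPolynomial (Fin n) R) : finSuccEquiv R n (rename Fin.succ s) = Polynomial.C s := by
  induction s using MvPolynomial.induction_on with
  | C a => simp [finSuccEquiv_apply]
  | add p q hp hq => simp [hp, hq]
  | mul_X p i hp => simp [hp, finSuccEquiv_X_succ]

theorem dvd_of_dvd_mul_rename_succ {R : Type*} [CommRing R] [IsDomain R] {n : ℕ}
    {f u : MvPolynomial (Fin (n + 1)) R} {s : MvPolynomial (Fin n) R}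
    (hf : (finSuccEquiv R n f).Monic) (hs : s ≠ 0) (h : f ∣ u * rename Fin.succ s) : f ∣ u := by
  have h' : finSuccEquiv R n f ∣ finSuccEquiv R n u * Polynomial.C s := by
    simpa [finSuccEquiv_rename_succ] using map_dvd (finSuccEquiv R n) h
  simpa using map_dvd (finSuccEquiv R n).symm (hf.dvd_of_dvd_mul_C hs h')

end MvPolynomial

section PlaneDerivation

variable {R : Type*} [CommRing R]

noncomputable def derivationDet
    (D₁ D₂ : Derivation R (MvPolynomial (Fin 2) R) (MvPolynomial (Fin 2) R)) :
    MvPolynomial (Fin 2) R :=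
  D₁ (X 0) * D₂ (X 1) - D₂ (X 0) * D₁ (X 1)

theorem derivationDet_smul_eq
    (D D₁ D₂ : Derivation R (MvPolynomial (Fin 2) R) (MvPolynomial (Fin 2) R)) :
    derivationDet D₁ D₂ • D = derivationDet D D₂ • D₁ + derivationDet D₁ D • D₂ :=
  derivation_ext fun i => by fin_cases i <;> simp [derivationDet] <;> ring

theorem linearIndependent_of_derivationDet_ne_zero [IsDomain R]
    {D₁ D₂ : Derivation R (MvPolynomial (Fin 2) R) (MvPolynomial (Fin 2) R)}
    (h : derivationDet D₁ D₂ ≠ 0) : LinearIndependent (MvPolynomial (Fin 2) R) ![D₁, D₂] := by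
  refine LinearIndependent.pair_iffₛ.mpr fun s t s' t' hst => ?_
  have hx : s * D₁ (X 0) + t * D₂ (X 0) = s' * D₁ (X 0) + t' * D₂ (X 0) := by
    simpa using congrArg (· (X 0)) hst
  have hy : s * D₁ (X 1) + t * D₂ (X 1) = s' * D₁ (X 1) + t' * D₂ (X 1) := by
    simpa using congrArg (· (X 1)) hst
  refine ⟨mul_right_cancel₀ h ?_, mul_right_cancel₀ h ?_⟩
  · unfold derivationDet; linear_combination D₂ (X 1) * hx - D₂ (X 0) * hy
  · unfold derivationDet; linear_combination D₁ (X 0) * hy - D₁ (X 1) * hx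

end PlaneDerivation

theorem dvd_derivationDet_mul_pderiv_zero {f : MvPolynomial (Fin 2) ℂ}
    {D₁ D₂ : Derivation ℂ (MvPolynomial (Fin 2) ℂ) (MvPolynomial (Fin 2) ℂ)}
    (h₁ : D₁ ∈ logDer f) (h₂ : D₂ ∈ logDer f) : f ∣ derivationDet D₁ D₂ * pderiv 0 f := by
  have h : derivationDet D₁ D₂ * pderiv 0 f = D₂ (X 1) * D₁ f - D₁ (X 1) * D₂ f := by
    rw [derivation_apply_eq_sum_pderiv D₁ f, derivation_apply_eq_sum_pderiv D₂ f,
      Fin.sum_univ_two, Fin.sum_univ_two, derivationDet]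
    ring
  rw [h]
  exact dvd_sub (dvd_mul_of_dvd_right h₁ _) (dvd_mul_of_dvd_right h₂ _)

theorem exists_basis_logDer_of_derivationDet_eq {f : MvPolynomial (Fin 2) ℂ}
    (hreg : ∀ u, f ∣ u * pderiv 0 f → f ∣ u)
    {δ₁ δ₂ : Derivation ℂ (MvPolynomial (Fin 2) ℂ) (MvPolynomial (Fin 2) ℂ)}
    (h₁ : δ₁ ∈ logDer f) (h₂ : δ₂ ∈ logDer f) (hdet : derivationDet δ₁ δ₂ = f) :
    ∃ B : Module.Basis (Fin 2) (MvPolynomial (Fin 2) ℂ) (logDer f),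
      B 0 = ⟨δ₁, h₁⟩ ∧ B 1 = ⟨δ₂, h₂⟩ := by
  have hf : f ≠ 0 := by
    rintro rfl
    exact one_ne_zero (zero_dvd_iff.mp (hreg 1 (by simp)))
  have hli : LinearIndependent (MvPolynomial (Fin 2) ℂ) ![(⟨δ₁, h₁⟩ : logDer f), ⟨δ₂, h₂⟩] := by
    apply LinearIndependent.of_comp (logDer f).subtype
    convert linearIndependent_of_derivationDet_ne_zero (hdet ▸ hf) using 1
    ext i; fin_cases i <;> rfl
  have hspan : ⊤ ≤ Submodule.span (MvPolynomial (Fin 2) ℂ)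
      (Set.range ![(⟨δ₁, h₁⟩ : logDer f), ⟨δ₂, h₂⟩]) := by
    rintro ⟨δ, hδ⟩ -
    obtain ⟨p, hp⟩ := hreg _ (dvd_derivationDet_mul_pderiv_zero hδ h₂)
    obtain ⟨q, hq⟩ := hreg _ (dvd_derivationDet_mul_pderiv_zero h₁ hδ)
    have hδpq : δ = p • δ₁ + q • δ₂ := by
      refine derivation_eq_of_smul_eq_smul hf ?_
      rw [← hdet, derivationDet_smul_eq δ, hp, hq, hdet]
      simp only [smul_add, smul_smul]
    rw [Submodule.mem_span_range_iff_exists_fun]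
    exact ⟨![p, q], Subtype.ext (by simp [hδpq])⟩
  exact ⟨.mk hli hspan, by simp, by simp⟩

theorem finSuccEquiv_f10_monic : (finSuccEquiv ℂ 1 f10).Monic := by
  have hy : (yy : MvPolynomial (Fin 2) ℂ) = X (Fin.succ 0) := rfl
  simp only [f10, xx, hy, map_mul, map_add, map_sub, map_pow, finSuccEquiv_X_zero,
    finSuccEquiv_X_succ]
  monicity!

theorem f10_dvd_of_dvd_mul_pderiv_zero (u : MvPolynomial (Fin 2) ℂ)
    (h : f10 ∣ u * pderiv 0 f10) : f10 ∣ u := by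
  set s : MvPolynomial (Fin 1) ℂ := X 0 ^ 9 * (54 + 224 * X 0 + 248 * X 0 ^ 2 + 32 * X 0 ^ 3)
  have hs : s ≠ 0 := fun h0 => by
    have h1 := congrArg (eval 1) h0
    norm_num [s] at h1
  -- cofactors from eliminating `x` between `f` and `∂f/∂x`
  have hbezout : (-54 * yy ^ 3 + 36 * xx * yy ^ 2 + 90 * xx ^ 2 * yy - 60 * xx ^ 3 - 180 * yy ^ 4
      + 32 * xx * yy ^ 3 + 300 * xx ^ 2 * yy ^ 2 - 605 * xx ^ 3 * yy - 90 * yy ^ 5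
      - 355 * xx * yy ^ 4 + 780 * xx ^ 2 * yy ^ 3 - 1030 * xx ^ 3 * yy ^ 2 + 224 * yy ^ 6
      - 802 * xx * yy ^ 5 + 620 * xx ^ 2 * yy ^ 4 - 660 * xx ^ 3 * yy ^ 3 + 140 * yy ^ 7
      - 428 * xx * yy ^ 6 + 80 * xx ^ 2 * yy ^ 5 - 80 * xx ^ 3 * yy ^ 4 + 16 * yy ^ 8
      - 48 * xx * yy ^ 7) * f10
      + (18 * xx * yy ^ 3 - 12 * xx ^ 2 * yy ^ 2 - 18 * xx ^ 3 * yy + 12 * xx ^ 4 - 44 * yy ^ 5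
      + 60 * xx * yy ^ 4 - 50 * xx ^ 2 * yy ^ 3 - 60 * xx ^ 3 * yy ^ 2 + 121 * xx ^ 4 * yy
      - 158 * yy ^ 6 + 129 * xx * yy ^ 5 + 37 * xx ^ 2 * yy ^ 4 - 156 * xx ^ 3 * yy ^ 3
      + 206 * xx ^ 4 * yy ^ 2 - 256 * yy ^ 7 + 66 * xx * yy ^ 6 + 190 * xx ^ 2 * yy ^ 5
      - 124 * xx ^ 3 * yy ^ 4 + 132 * xx ^ 4 * yy ^ 3 - 140 * yy ^ 8 + 8 * xx * yy ^ 7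
      + 132 * xx ^ 2 * yy ^ 6 - 16 * xx ^ 3 * yy ^ 5 + 16 * xx ^ 4 * yy ^ 4 - 16 * yy ^ 9
      + 16 * xx ^ 2 * yy ^ 7) * pderiv 0 f10 = rename Fin.succ s := by
    simp [s, f10, xx, yy, map_ofNat]
    ring
  refine dvd_of_dvd_mul_rename_succ finSuccEquiv_f10_monic hs ?_
  rw [← hbezout, mul_add, ← mul_assoc, mul_left_comm]
  exact dvd_add (dvd_mul_left _ _) (dvd_mul_of_dvd_right h _)

theorem δ₁_mem_logDer : δ₁ ∈ logDer f10 :=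
  ⟨C (1 / 3 : ℂ) * (15 * xx ^ 2 + 5 * xx * yy - 18 * yy ^ 2), by
    simp [δ₁, f10, xx, yy, C_mul']
    algebra⟩

theorem δ₂_mem_logDer : δ₂ ∈ logDer f10 :=
  ⟨-5 * xx + 18 * yy + 15 * xx * yy + 23 * yy ^ 2, by
    simp [δ₂, f10, xx, yy]
    ring⟩

theorem derivationDet_δ₁_δ₂ : derivationDet δ₁ δ₂ = f10 := by
  simp [derivationDet, δ₁, δ₂, f10, xx, yy, C_mul']
  algebra

/-- for `f = (x³ + y⁴ + xy³)(x² − y²)`, the derivations `δ₁, δ₂`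
belong to `Der(−log f)` and form a `ℂ[x,y]`-basis of it. -/
theorem stmt10 :
    ∃ (h1 : δ₁ ∈ logDer f10) (h2 : δ₂ ∈ logDer f10),
      ∃ B : Module.Basis (Fin 2) (MvPolynomial (Fin 2) ℂ) (logDer f10),
        B 0 = ⟨δ₁, h1⟩ ∧ B 1 = ⟨δ₂, h2⟩ :=
  ⟨δ₁_mem_logDer, δ₂_mem_logDer, exists_basis_logDer_of_derivationDet_eq
    f10_dvd_of_dvd_mul_pderiv_zero δ₁_mem_logDer δ₂_mem_logDer derivationDet_δ₁_δ₂⟩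
end
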